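/- arXiv:2303.05566 — 2 statements merged into one kernel-verified Lean document; each statement's English description precedes it below -/
import Mathlib

section
/- Let μ = gaussianReal m₁ v₁ and ν = gaussianReal m₂ v₂ be Gaussian probability measures on ℝ with means m₁, m₂ ∈ ℝ and variances v₁, v₂ ≥ 0. Then for every 1-Lipschitz function h : ℝ → ℝ that is integrable with respect to both μ and ν, |∫ h dμ − ∫ h dν| ≤ √((m₁ − m₂)² + (√v₁ − √v₂)²). -/
/-!
Couple the two Gaussians through one standard Gaussian `Z`: `X = √v₁ Z + m₁` and
`Y = √v₂ Z + m₂`. For a 1-Lipschitz `h`, `|E h(X) - E h(Y)| ≤ E|X - Y| ≤ (E (X - Y)²)^{1/2}`,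
and `X - Y = (√v₁ - √v₂) Z + (m₁ - m₂)` has second moment `(m₁ - m₂)² + (√v₁ - √v₂)²`.
-/

open MeasureTheory ProbabilityTheory NNReal

lemma integral_abs_le_sqrt_integral_sq {Ω : Type*} {mΩ : MeasurableSpace Ω} {μ : Measure Ω}
    [IsProbabilityMeasure μ] {f : Ω → ℝ} (hf : MemLp f 2 μ) :
    ∫ ω, |f ω| ∂μ ≤ √(∫ ω, f ω ^ 2 ∂μ) := by
  have hvar := variance_nonneg |f| μ
  rw [variance_eq_sub hf.abs] at hvar
  simp only [Pi.pow_apply, Pi.abs_apply, sq_abs] at hvar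
  exact Real.le_sqrt_of_sq_le (by linarith)

lemma LipschitzWith.abs_integral_map_sub_le {Ω α : Type*} {mΩ : MeasurableSpace Ω}
    {P : Measure Ω} [PseudoMetricSpace α] [MeasurableSpace α] [OpensMeasurableSpace α]
    {K : ℝ≥0} {h : α → ℝ} (hh : LipschitzWith K h) {X Y : Ω → α}
    (hX : AEMeasurable X P) (hY : AEMeasurable Y P)
    (hX' : Integrable h (P.map X)) (hY' : Integrable h (P.map Y))
    (hXY : Integrable (fun ω ↦ dist (X ω) (Y ω)) P) :
    |∫ x, h x ∂P.map X - ∫ x, h x ∂P.map Y| ≤ K * ∫ ω, dist (X ω) (Y ω) ∂P := by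
  have hhX : Integrable (fun ω ↦ h (X ω)) P := hX'.comp_aemeasurable hX
  have hhY : Integrable (fun ω ↦ h (Y ω)) P := hY'.comp_aemeasurable hY
  rw [integral_map hX hh.continuous.aestronglyMeasurable,
    integral_map hY hh.continuous.aestronglyMeasurable, ← integral_sub hhX hhY,
    ← integral_const_mul]
  refine abs_integral_le_integral_abs.trans (integral_mono_of_nonneg ?_ (hXY.const_mul _) ?_)
  · exact Filter.Eventually.of_forall fun _ ↦ abs_nonneg _
  · exact Filter.Eventually.of_forall fun ω ↦ hh.dist_le_mul (X ω) (Y ω)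

lemma gaussianReal_map_const_mul_add {μ : ℝ} {v : ℝ≥0} (c y : ℝ) :
    (gaussianReal μ v).map (fun x ↦ c * x + y) =
      gaussianReal (c * μ + y) (.mk (c ^ 2) (sq_nonneg _) * v) := by
  rw [show (fun x ↦ c * x + y) = (· + y) ∘ (c * ·) from rfl,
    ← Measure.map_map (by fun_prop) (by fun_prop), gaussianReal_map_const_mul,
    gaussianReal_map_add_const]

lemma gaussianReal_eq_map_gaussianReal_zero_one (m : ℝ) (v : ℝ≥0) :
    gaussianReal m v = (gaussianReal 0 1).map (fun x ↦ √v * x + m) := by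
  rw [gaussianReal_map_const_mul_add]
  congr 1
  · simp
  · ext
    simp

lemma integral_sq_gaussianReal (μ : ℝ) (v : ℝ≥0) : ∫ x, x ^ 2 ∂gaussianReal μ v = μ ^ 2 + v := by
  have hvar := variance_eq_sub (memLp_id_gaussianReal (μ := μ) (v := v) 2)
  rw [variance_id_gaussianReal] at hvar
  simp only [id, Pi.pow_apply, integral_id_gaussianReal] at hvar
  linarith

lemma integral_const_mul_add_sq_gaussianReal {μ : ℝ} {v : ℝ≥0} (c y : ℝ) :
    ∫ x, (c * x + y) ^ 2 ∂gaussianReal μ v = (c * μ + y) ^ 2 + c ^ 2 * v := by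
  rw [← integral_map (f := fun x ↦ x ^ 2) (by fun_prop) (by fun_prop),
    gaussianReal_map_const_mul_add, integral_sq_gaussianReal, NNReal.coe_mul, NNReal.coe_mk]

/-- Upper bound on the dual-form Wasserstein distance between two real Gaussians
by their 2-Wasserstein distance `√((m₁ − m₂)² + (√v₁ − √v₂)²)`. -/
theorem gaussian_wasserstein_upper_bound
    (m₁ m₂ : ℝ) (v₁ v₂ : ℝ≥0)
    (h : ℝ → ℝ) (hLip : LipschitzWith 1 h)
    (h₁ : Integrable h (gaussianReal m₁ v₁)) (h₂ : Integrable h (gaussianReal m₂ v₂)) :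
    |∫ x, h x ∂(gaussianReal m₁ v₁) - ∫ x, h x ∂(gaussianReal m₂ v₂)| ≤
      Real.sqrt ((m₁ - m₂) ^ 2 + (Real.sqrt v₁ - Real.sqrt v₂) ^ 2) := by
  rw [gaussianReal_eq_map_gaussianReal_zero_one m₁ v₁] at h₁ ⊢
  rw [gaussianReal_eq_map_gaussianReal_zero_one m₂ v₂] at h₂ ⊢
  have hdist (x : ℝ) : dist (√v₁ * x + m₁) (√v₂ * x + m₂) = |(√v₁ - √v₂) * x + (m₁ - m₂)| := by
    rw [Real.dist_eq]
    ring_nf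
  have hL2 : MemLp (fun x ↦ (√v₁ - √v₂) * x + (m₁ - m₂)) 2 (gaussianReal 0 1) :=
    ((memLp_id_gaussianReal 2).const_mul _).add (memLp_const _)
  calc _ ≤ 1 * ∫ x, dist (√v₁ * x + m₁) (√v₂ * x + m₂) ∂gaussianReal 0 1 :=
        hLip.abs_integral_map_sub_le (by fun_prop) (by fun_prop) h₁ h₂
          (by simpa only [hdist] using (hL2.integrable one_le_two).abs)
    _ = ∫ x, |(√v₁ - √v₂) * x + (m₁ - m₂)| ∂gaussianReal 0 1 := by simp only [one_mul, hdist]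
    _ ≤ √(∫ x, ((√v₁ - √v₂) * x + (m₁ - m₂)) ^ 2 ∂gaussianReal 0 1) :=
        integral_abs_le_sqrt_integral_sq hL2
    _ = _ := by
        rw [integral_const_mul_add_sq_gaussianReal, NNReal.coe_one]
        ring_nf
end

section
/- Let X be a metric space with its Borel σ-algebra, μ and ν probability measures on X, η > 0, ι a finite index type, A : ι → Set X pairwise disjoint measurable sets with ⋃ᵢ Aᵢ = X, and q : ι → X points with dist(x, qᵢ) ≤ η for every i and every x ∈ Aᵢ. Let c ≥ 0 be such that |∫ g dμ − ∫ g dν| ≤ c for every 1-Lipschitz function g : X → ℝ that is integrable with respect to both μ and ν. Then for every 1-Lipschitz function h : X → ℝ integrable with respect to both μ and ν, |∑ᵢ (μ(Aᵢ) − ν(Aᵢ)) · h(qᵢ)| ≤ c + 2η. -/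
/-!
Replace `h` by the step function `h̃` equal to `h (q i)` on `A i`. Then `∫ h̃ dμ - ∫ h̃ dν` is
exactly the discrete sum, and `|h - h̃| ≤ η` pointwise, so passing from `h` to `h̃` under each
of the two probability measures costs at most `η`.
-/

open MeasureTheory

section PiecewiseConst

variable {X ι : Type*} [Fintype ι]

noncomputable def piecewiseConst (A : ι → Set X) (v : ι → ℝ) (x : X) : ℝ :=
  ∑ i, (A i).indicator (fun _ => v i) x

variable {A : ι → Set X} {v : ι → ℝ}

theorem piecewiseConst_apply_of_mem (hdisj : Pairwise (Function.onFun Disjoint A))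
    {i : ι} {x : X} (hx : x ∈ A i) : piecewiseConst A v x = v i := by
  classical
  refine (Finset.sum_eq_single i (fun j _ hji => ?_) (by simp)).trans
    (Set.indicator_of_mem hx _)
  exact Set.indicator_of_notMem (fun hxj => (hdisj hji).le_bot ⟨hxj, hx⟩) _

theorem abs_sub_piecewiseConst_le [PseudoMetricSpace X]
    (hdisj : Pairwise (Function.onFun Disjoint A)) (hcover : (⋃ i, A i) = Set.univ)
    {q : ι → X} {η : ℝ} (hfine : ∀ i, ∀ x ∈ A i, dist x (q i) ≤ η)
    {K : NNReal} {h : X → ℝ} (hLip : LipschitzWith K h) (x : X) :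
    |h x - piecewiseConst A (h ∘ q) x| ≤ K * η := by
  obtain ⟨i, hxi⟩ := Set.mem_iUnion.mp (hcover ▸ Set.mem_univ x)
  rw [piecewiseConst_apply_of_mem hdisj hxi, ← Real.dist_eq]
  exact (hLip.dist_le_mul _ _).trans (by gcongr; exact hfine i x hxi)

variable [MeasurableSpace X] (ρ : Measure X) [IsFiniteMeasure ρ]

theorem integrable_piecewiseConst (hmeas : ∀ i, MeasurableSet (A i)) :
    Integrable (piecewiseConst A v) ρ :=
  integrable_finsetSum _ fun i _ => (integrable_const _).indicator (hmeas i)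

theorem integral_piecewiseConst (hmeas : ∀ i, MeasurableSet (A i)) :
    ∫ x, piecewiseConst A v x ∂ρ = ∑ i, ρ.real (A i) * v i := by
  simp only [piecewiseConst]
  rw [integral_finsetSum _ fun i _ => (integrable_const _).indicator (hmeas i)]
  simp only [integral_indicator_const _ (hmeas _), smul_eq_mul]

end PiecewiseConst

theorem abs_integral_sub_integral_le_of_abs_sub_le {X : Type*} [MeasurableSpace X]
    {ρ : Measure X} [IsProbabilityMeasure ρ] {f g : X → ℝ} {ε : ℝ}
    (hf : Integrable f ρ) (hg : Integrable g ρ) (hfg : ∀ x, |f x - g x| ≤ ε) :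
    |∫ x, f x ∂ρ - ∫ x, g x ∂ρ| ≤ ε := by
  rw [← integral_sub hf hg]
  simpa using norm_integral_le_of_norm_le_const (μ := ρ) (f := fun x => f x - g x)
    (.of_forall hfg)

theorem discretization_pair_wasserstein_bound_general
    {X : Type*} [MetricSpace X] [MeasurableSpace X]
    (μ ν : Measure X) [IsProbabilityMeasure μ] [IsProbabilityMeasure ν]
    (η : ℝ)
    {ι : Type*} [Fintype ι] (A : ι → Set X) (q : ι → X)
    (hmeas : ∀ i, MeasurableSet (A i))
    (hdisj : Pairwise (Function.onFun Disjoint A))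
    (hcover : (⋃ i, A i) = Set.univ)
    (hfine : ∀ i, ∀ x ∈ A i, dist x (q i) ≤ η)
    (c : ℝ)
    (hW : ∀ g : X → ℝ, LipschitzWith 1 g → Integrable g μ → Integrable g ν →
      |∫ x, g x ∂μ - ∫ x, g x ∂ν| ≤ c)
    (h : X → ℝ) (hLip : LipschitzWith 1 h)
    (hμ : Integrable h μ) (hν : Integrable h ν) :
    |∑ i, ((μ (A i)).toReal - (ν (A i)).toReal) * h (q i)| ≤ c + 2 * η := by
  set f := piecewiseConst A (h ∘ q)
  have hdiscrete : ∑ i, ((μ (A i)).toReal - (ν (A i)).toReal) * h (q i)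
      = ∫ x, f x ∂μ - ∫ x, f x ∂ν := by
    simp only [f, integral_piecewiseConst _ hmeas, measureReal_def, sub_mul,
      Finset.sum_sub_distrib, Function.comp_apply]
  have hclose (ρ : Measure X) [IsProbabilityMeasure ρ] (hρ : Integrable h ρ) :
      |∫ x, h x ∂ρ - ∫ x, f x ∂ρ| ≤ η :=
    abs_integral_sub_integral_le_of_abs_sub_le hρ (integrable_piecewiseConst ρ hmeas)
      fun x => by simpa using abs_sub_piecewiseConst_le hdisj hcover hfine hLip x
  rw [hdiscrete]
  linarith [abs_sub_comm (∫ x, f x ∂μ) (∫ x, h x ∂μ),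
    abs_sub_le (∫ x, f x ∂μ) (∫ x, h x ∂μ) (∫ x, f x ∂ν),
    abs_sub_le (∫ x, h x ∂μ) (∫ x, h x ∂ν) (∫ x, f x ∂ν), hW h hLip hμ hν,
    hclose μ hμ, hclose ν hν]

/-- Discretizing two probability measures over a common partition of fineness `η`
increases their dual-form Wasserstein distance by at most `2η`: if `W(μ − ν) ≤ c`
then `|∑ i (μ(Aᵢ) − ν(Aᵢ)) h(qᵢ)| ≤ c + 2η` for every 1-Lipschitz `h`. -/
theorem discretization_pair_wasserstein_bound
    {X : Type*} [MetricSpace X] [MeasurableSpace X] [BorelSpace X]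
    (μ ν : Measure X) [IsProbabilityMeasure μ] [IsProbabilityMeasure ν]
    (η : ℝ) (hη : 0 < η)
    {ι : Type*} [Fintype ι] (A : ι → Set X) (q : ι → X)
    (hmeas : ∀ i, MeasurableSet (A i))
    (hdisj : Pairwise (Function.onFun Disjoint A))
    (hcover : (⋃ i, A i) = Set.univ)
    (hfine : ∀ i, ∀ x ∈ A i, dist x (q i) ≤ η)
    (c : ℝ) (hc : 0 ≤ c)
    (hW : ∀ g : X → ℝ, LipschitzWith 1 g → Integrable g μ → Integrable g ν →
      |∫ x, g x ∂μ - ∫ x, g x ∂ν| ≤ c)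
    (h : X → ℝ) (hLip : LipschitzWith 1 h)
    (hμ : Integrable h μ) (hν : Integrable h ν) :
    |∑ i, ((μ (A i)).toReal - (ν (A i)).toReal) * h (q i)| ≤ c + 2 * η :=
  discretization_pair_wasserstein_bound_general μ ν η A q hmeas hdisj hcover hfine c hW h hLip hμ hν
end
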